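/- arXiv:1512.07275 — 7 statements merged into one kernel-verified Lean document; each statement's English description precedes it below -/
import Mathlib

section
/- Let S be an additive commutative monoid, A ⊆ S, and k, n positive integers. If A is k-konvex and n-konvex, then A is kn-konvex. Consequently, the set K_A := {n ∈ ℕ, n ≥ 1 : A is n-konvex} is closed under multiplication, i.e., it is a multiplicative subsemigroup of the positive integers. -/
open Pointwise

/-- The dilation `nA = {n • x : x ∈ A}`. -/
def dilate {S : Type*} [AddCommMonoid S] (n : ℕ) (A : Set S) : Set S :=
  (fun x => n • x) '' A

/-- The "inverse dilation" `n⁻¹A = {x : n • x ∈ A}`. -/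
def invDilate {S : Type*} [AddCommMonoid S] (n : ℕ) (A : Set S) : Set S :=
  {x | n • x ∈ A}

/-- The `n`-fold sumset `[n]A = {x₁ + ⋯ + xₙ : xᵢ ∈ A}`. -/
def foldSum {S : Type*} [AddCommMonoid S] (n : ℕ) (A : Set S) : Set S :=
  {y | ∃ f : Fin n → S, (∀ i, f i ∈ A) ∧ y = ∑ i, f i}

/-- `A` is `n`-convex if `n⁻¹([n]A) ⊆ A`. -/
def IsNConvex {S : Type*} [AddCommMonoid S] (n : ℕ) (A : Set S) : Prop :=
  invDilate n (foldSum n A) ⊆ A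

/-- `A` is `n`-konvex if `[n]A ⊆ nA`. -/
def IsNKonvex {S : Type*} [AddCommMonoid S] (n : ℕ) (A : Set S) : Prop :=
  foldSum n A ⊆ dilate n A

/-- `A` is `F`-convex if it is `n`-convex for every `n ∈ F`. -/
def IsFConvex {S : Type*} [AddCommMonoid S] (F : Set ℕ) (A : Set S) : Prop :=
  ∀ n ∈ F, IsNConvex n A

/-- `A` is `F`-konvex if it is `n`-konvex for every `n ∈ F`. -/
def IsFKonvex {S : Type*} [AddCommMonoid S] (F : Set ℕ) (A : Set S) : Prop :=
  ∀ n ∈ F, IsNKonvex n A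

/-- The `F`-convex hull of `A`. -/
def convHullF {S : Type*} [AddCommMonoid S] (F : Set ℕ) (A : Set S) : Set S :=
  ⋂₀ {C | A ⊆ C ∧ IsFConvex F C}

/-- The set of positive integers. -/
def posNat : Set ℕ := {n | 0 < n}

/-- `A` and `B` are `F`-disjoint if `[n]A ∩ [n]B = ∅` for all `n ∈ F`. -/
def FDisjoint {S : Type*} [AddCommMonoid S] (F : Set ℕ) (A B : Set S) : Prop :=
  ∀ n ∈ F, foldSum n A ∩ foldSum n B = ∅

theorem stmt1 {S : Type*} [AddCommMonoid S] (k n : ℕ) (hk : 0 < k) (hn : 0 < n)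
    (A : Set S) (hkA : IsNKonvex k A) (hnA : IsNKonvex n A) :
    IsNKonvex (k * n) A := by
  rintro y ⟨f, hf, rfl⟩
  -- reindex the sum over `Fin (k * n)` as a double sum over `Fin k × Fin n`
  have key : ∀ j : Fin k, (∑ i : Fin n, f (finProdFinEquiv (j, i))) ∈ dilate n A := by
    intro j
    exact hnA ⟨fun i => f (finProdFinEquiv (j, i)), fun i => hf _, rfl⟩
  choose g hg hgn using fun j => key j
  have hsum : (∑ j : Fin k, g j) ∈ dilate k A :=
    hkA ⟨g, hg, rfl⟩
  obtain ⟨a, ha, hka⟩ := hsum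
  refine ⟨a, ha, ?_⟩
  calc (k * n) • a = n • (k • a) := by rw [mul_comm, mul_smul]
    _ = n • (∑ j : Fin k, g j) := congrArg _ hka
    _ = ∑ j : Fin k, n • g j := by rw [Finset.smul_sum]
    _ = ∑ j : Fin k, ∑ i : Fin n, f (finProdFinEquiv (j, i)) := by
        exact Finset.sum_congr rfl fun j _ => hgn j
    _ = ∑ p : Fin k × Fin n, f (finProdFinEquiv p) := by
        rw [Fintype.sum_prod_type]
    _ = ∑ i : Fin (k * n), f i := Fintype.sum_equiv finProdFinEquiv _ _ (fun _ => rfl)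
end

section
/- Let S be an additive commutative monoid, A ⊆ S, and let n, k be positive integers with k dividing n. If A is n-convex, then A is k-convex. Consequently, the set C_A := {n ∈ ℕ, n ≥ 1 : A is n-convex} is closed under taking positive divisors. -/
open Pointwise

theorem stmt2 {S : Type*} [AddCommMonoid S] (n k : ℕ) (hk : 0 < k) (hn : 0 < n)
    (hdvd : k ∣ n) (A : Set S) (hA : IsNConvex n A) :
    IsNConvex k A := by
  obtain ⟨m, rfl⟩ := hdvd
  intro x hx
  obtain ⟨f, hf, hsum⟩ := hx
  apply hA
  refine ⟨fun i => f (finProdFinEquiv.symm i).1, fun i => hf _, ?_⟩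
  have h1 : ∑ i : Fin (k * m), f (finProdFinEquiv.symm i).1
      = ∑ p : Fin k × Fin m, f p.1 := by
    rw [← finProdFinEquiv.sum_comp]
    simp
  rw [h1, Fintype.sum_prod_type]
  simp only [Finset.sum_const, Finset.card_univ, Fintype.card_fin]
  rw [mul_comm k m, mul_smul, hsum, Finset.smul_sum]
end

section
/- Let S be an additive commutative monoid, let n and k be positive integers, and let A ⊆ S be n-konvex. Then both the dilation kA and the k-fold sumset [k]A are n-konvex. In particular, for any nonempty set F of positive integers, the family of F-konvex sets is closed under the operations A ↦ kA and A ↦ [k]A for every positive integer k. -/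
open Pointwise

lemma konvex_dilate' {S : Type*} [AddCommMonoid S] (n k : ℕ) (A : Set S)
    (h : IsNKonvex n A) : IsNKonvex n (dilate k A) := by
  rintro y ⟨f, hf, rfl⟩
  choose g hg hfg using hf
  have hsum : ∑ i, f i = k • ∑ i, g i := by
    rw [Finset.smul_sum]
    exact Finset.sum_congr rfl fun i _ => (hfg i).symm
  obtain ⟨a, ha, hae⟩ := h ⟨g, hg, rfl⟩
  exact ⟨k • a, ⟨a, ha, rfl⟩, by simp only [] at hae ⊢; rw [smul_comm, hae, ← hsum]⟩

lemma konvex_foldSum' {S : Type*} [AddCommMonoid S] (n k : ℕ) (A : Set S)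
    (h : IsNKonvex n A) : IsNKonvex n (foldSum k A) := by
  rintro y ⟨f, hf, rfl⟩
  choose g hg hfg using hf
  have key : ∀ j : Fin k, (∑ i : Fin n, g i j) ∈ dilate n A :=
    fun j => h ⟨fun i => g i j, fun i => hg i j, rfl⟩
  choose a ha hae using key
  refine ⟨∑ j, a j, ⟨a, ha, rfl⟩, ?_⟩
  calc n • ∑ j, a j = ∑ j, n • a j := Finset.smul_sum
    _ = ∑ j : Fin k, ∑ i : Fin n, g i j := Finset.sum_congr rfl fun j _ => hae j
    _ = ∑ i : Fin n, ∑ j : Fin k, g i j := Finset.sum_comm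
    _ = ∑ i, f i := Finset.sum_congr rfl fun i _ => (hfg i).symm

theorem stmt4 {S : Type*} [AddCommMonoid S] :
    (∀ (n k : ℕ), 0 < n → 0 < k → ∀ A : Set S,
      IsNKonvex n A → IsNKonvex n (dilate k A) ∧ IsNKonvex n (foldSum k A)) ∧
    (∀ F : Set ℕ, F.Nonempty → (∀ n ∈ F, 0 < n) → ∀ (k : ℕ), 0 < k → ∀ A : Set S,
      IsFKonvex F A → IsFKonvex F (dilate k A) ∧ IsFKonvex F (foldSum k A)) := by
  constructor
  · exact fun n k _ _ A h => ⟨konvex_dilate' n k A h, konvex_foldSum' n k A h⟩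
  · intro F _ _ k _ A h
    exact ⟨fun n hn => konvex_dilate' n k A (h n hn),
           fun n hn => konvex_foldSum' n k A (h n hn)⟩
end

section
/- Let S be an additive commutative monoid, let n and k be positive integers, and let A ⊆ S be n-convex. Then the set k⁻¹A := {x ∈ S : k•x ∈ A} is n-convex. In particular, for any nonempty set F of positive integers, the family of F-convex sets is closed under the operation A ↦ k⁻¹A for every positive integer k. -/
open Pointwise

theorem stmt5 {S : Type*} [AddCommMonoid S] :
    (∀ (n k : ℕ), 0 < n → 0 < k → ∀ A : Set S,
      IsNConvex n A → IsNConvex n (invDilate k A)) ∧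
    (∀ F : Set ℕ, F.Nonempty → (∀ n ∈ F, 0 < n) → ∀ (k : ℕ), 0 < k → ∀ A : Set S,
      IsFConvex F A → IsFConvex F (invDilate k A)) := by
  have main : ∀ (n k : ℕ), 0 < n → 0 < k → ∀ A : Set S,
      IsNConvex n A → IsNConvex n (invDilate k A) := by
    intro n k _ _ A hA x hx
    obtain ⟨f, hf, hsum⟩ := hx
    have : k • x ∈ invDilate n (foldSum n A) := by
      show n • (k • x) ∈ foldSum n A
      refine ⟨fun i => k • f i, fun i => hf i, ?_⟩
      rw [smul_comm, hsum, Finset.smul_sum]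
    exact hA this
  exact ⟨main, fun F _ hF k hk A hA n hn => main n k (hF n hn) hk A (hA n hn)⟩
end

section
/- Let S be an additive commutative monoid, let n be a positive integer, let A ⊆ S be n-convex and let B ⊆ S be n-konvex. Then the intersection A ∩ B is n-konvex. In particular, for any nonempty set F of positive integers, if S itself is F-konvex, then every F-convex subset of S is also F-konvex. -/
open Pointwise

theorem stmt9 {S : Type*} [AddCommMonoid S] :
    (∀ (n : ℕ), 0 < n → ∀ A B : Set S,
      IsNConvex n A → IsNKonvex n B → IsNKonvex n (A ∩ B)) ∧
    (∀ F : Set ℕ, F.Nonempty → (∀ n ∈ F, 0 < n) →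
      IsFKonvex F (Set.univ : Set S) → ∀ A : Set S, IsFConvex F A → IsFKonvex F A) := by
  have key : ∀ (n : ℕ), 0 < n → ∀ A B : Set S,
      IsNConvex n A → IsNKonvex n B → IsNKonvex n (A ∩ B) := by
    intro n _ A B hA hB y hy
    obtain ⟨f, hf, rfl⟩ := hy
    have hyB : (∑ i, f i) ∈ dilate n B :=
      hB ⟨f, fun i => (hf i).2, rfl⟩
    obtain ⟨x, hxB, hx⟩ := hyB
    have hxA : x ∈ A := by
      apply hA
      show n • x ∈ foldSum n A
      simp only at hx
      rw [hx]
      exact ⟨f, fun i => (hf i).1, rfl⟩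
    exact ⟨x, ⟨hxA, hxB⟩, hx⟩
  refine ⟨key, fun F _ hpos hU A hA n hn => ?_⟩
  have := key n (hpos n hn) A Set.univ (hA n hn) (hU n hn)
  simpa using this
end

section
/- Let S be an additive commutative monoid, let F be a nonempty set of positive integers, and let A ⊆ S. Then A ⊆ ⋃_{n∈F} n⁻¹([n]A) ⊆ conv_F(A) ⊆ ⋃_{n∈⟨F⟩} n⁻¹([n]A), where ⟨F⟩ denotes the multiplicative subsemigroup of the positive integers generated by F (the set of all finite products of elements of F). -/
open Pointwise

lemma foldSum_mono {S : Type*} [AddCommMonoid S] (n : ℕ) {A B : Set S} (h : A ⊆ B) :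
    foldSum n A ⊆ foldSum n B := by
  rintro y ⟨f, hf, rfl⟩
  exact ⟨f, fun i => h (hf i), rfl⟩

lemma const_mem_foldSum {S : Type*} [AddCommMonoid S] (n : ℕ) {A : Set S} {x : S} (hx : x ∈ A) :
    n • x ∈ foldSum n A :=
  ⟨fun _ => x, fun _ => hx, by simp⟩

lemma sum_mem_foldSum {S : Type*} [AddCommMonoid S] {m N : ℕ} {A : Set S} (f : Fin m → S)
    (hf : ∀ i, f i ∈ foldSum N A) : (∑ i, f i) ∈ foldSum (m * N) A := by
  choose g hgA hgs using hf
  refine ⟨fun k => g (finProdFinEquiv.symm k).1 (finProdFinEquiv.symm k).2,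
    fun k => hgA _ _, ?_⟩
  calc ∑ i, f i = ∑ i, ∑ j, g i j := by simp [hgs]
    _ = ∑ p : Fin m × Fin N, g p.1 p.2 := (Fintype.sum_prod_type (fun p : Fin m × Fin N => g p.1 p.2)).symm
    _ = _ := by
        rw [← Equiv.sum_comp finProdFinEquiv.symm (fun p : Fin m × Fin N => g p.1 p.2)]

lemma smul_mem_foldSum {S : Type*} [AddCommMonoid S] {n : ℕ} (k : ℕ) {A : Set S} {y : S}
    (hy : y ∈ foldSum n A) : k • y ∈ foldSum (k * n) A := by
  have := sum_mem_foldSum (fun _ : Fin k => y) (fun _ => hy)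
  simpa using this


theorem stmt10 {S : Type*} [AddCommMonoid S] (F : Set ℕ) (hF : F.Nonempty)
    (hpos : ∀ n ∈ F, 0 < n) (A : Set S) :
    A ⊆ (⋃ n ∈ F, invDilate n (foldSum n A)) ∧
    (⋃ n ∈ F, invDilate n (foldSum n A)) ⊆ convHullF F A ∧
    convHullF F A ⊆ ⋃ n ∈ (Subsemigroup.closure F : Set ℕ), invDilate n (foldSum n A) := by
  obtain ⟨n₀, hn₀⟩ := hF
  have part1 : A ⊆ ⋃ n ∈ F, invDilate n (foldSum n A) := by
    intro x hx
    exact Set.mem_biUnion hn₀ (const_mem_foldSum n₀ hx)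
  refine ⟨part1, ?_, ?_⟩
  · intro x hx
    simp only [Set.mem_iUnion] at hx
    obtain ⟨n, hn, hx⟩ := hx
    intro C hC
    exact hC.2 n hn (foldSum_mono n hC.1 hx)
  · set B := ⋃ n ∈ (Subsemigroup.closure F : Set ℕ), invDilate n (foldSum n A) with hB
    have hAB : A ⊆ B := by
      intro x hx
      exact Set.mem_biUnion (Subsemigroup.subset_closure hn₀) (const_mem_foldSum n₀ hx)
    have hconv : IsFConvex F B := by
      intro m hm x hx
      obtain ⟨f, hf, heq⟩ := hx
      have hf' : ∀ i, ∃ k, k ∈ Subsemigroup.closure F ∧ (k : ℕ) • f i ∈ foldSum k A := by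
        intro i
        have := hf i
        simp only [hB, Set.mem_iUnion] at this
        obtain ⟨k, hk, hk2⟩ := this
        exact ⟨k, hk, hk2⟩
      choose n hnF hnmem using hf'
      set N := ∏ i, n i with hN
      have hNmem : N ∈ Subsemigroup.closure F := by
        refine Finset.prod_induction_nonempty _ _ (fun a b ha hb => mul_mem ha hb)
          ⟨⟨0, hpos m hm⟩, Finset.mem_univ _⟩ (fun i _ => hnF i)
      have hdvd : ∀ i, n i ∣ N := fun i => Finset.dvd_prod_of_mem _ (Finset.mem_univ i)
      have hNfi : ∀ i, N • f i ∈ foldSum N A := by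
        intro i
        have h1 : (N / n i) • (n i • f i) ∈ foldSum (N / n i * n i) A :=
          smul_mem_foldSum _ (hnmem i)
        rw [Nat.div_mul_cancel (hdvd i)] at h1
        rwa [← mul_smul, Nat.div_mul_cancel (hdvd i)] at h1
      have key : (m * N) • x ∈ foldSum (m * N) A := by
        have h2 : (∑ i, N • f i) ∈ foldSum (m * N) A := sum_mem_foldSum _ hNfi
        have h3 : (m * N) • x = ∑ i, N • f i := by
          rw [mul_comm, mul_smul, heq, Finset.smul_sum]
        rwa [h3]
      exact Set.mem_biUnion (mul_mem (Subsemigroup.subset_closure hm) hNmem) key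
    exact Set.sInter_subset_of_mem ⟨hAB, hconv⟩
end

section
/- Let S be an additive commutative monoid and let F be a nonempty set of positive integers closed under multiplication. Then for all x, y ∈ S, the F-convex hulls conv_F({x}) and conv_F({y}) are either disjoint or equal. -/
open Pointwise

lemma smul_eq_of_dvd {S : Type*} [AddCommMonoid S] {n m : ℕ} {z x : S}
    (h : n • z = n • x) (hd : n ∣ m) : m • z = m • x := by
  obtain ⟨c, rfl⟩ := hd
  rw [mul_comm, mul_smul, mul_smul, h]

lemma hull_singleton {S : Type*} [AddCommMonoid S] (F : Set ℕ) (hF : F.Nonempty)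
    (hpos : ∀ n ∈ F, 0 < n) (hmul : ∀ m ∈ F, ∀ n ∈ F, m * n ∈ F) (x : S) :
    convHullF F {x} = {z | ∃ n ∈ F, n • z = n • x} := by
  apply subset_antisymm
  · intro z hz
    refine hz _ ⟨?_, ?_⟩
    · rintro a rfl
      obtain ⟨n, hn⟩ := hF
      exact ⟨n, hn, rfl⟩
    · intro k hk w hw
      obtain ⟨f, hf, heq⟩ := hw
      choose g hgF hg using hf
      have hk0 : 0 < k := hpos k hk
      have huniv : (Finset.univ : Finset (Fin k)).Nonempty := by
        simpa [Finset.univ_nonempty_iff] using Fin.pos_iff_nonempty.mp hk0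
      have hm : (∏ i, g i) ∈ F :=
        Finset.prod_induction_nonempty g (· ∈ F) (fun a b ha hb => hmul a ha b hb)
          huniv (fun i _ => hgF i)
      set m := ∏ i, g i with hmdef
      refine ⟨m * k, hmul m hm k hk, ?_⟩
      have h1 : (m * k) • w = m • (k • w) := mul_smul m k w
      have h2 : m • (k • w) = ∑ i, m • f i := by
        rw [heq, Finset.smul_sum]
      have h3 : ∀ i : Fin k, m • f i = m • x := fun i =>
        smul_eq_of_dvd (hg i) (Finset.dvd_prod_of_mem g (Finset.mem_univ i))
      have h4 : (∑ i : Fin k, m • x) = (m * k) • x := by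
        rw [Finset.sum_const, Finset.card_univ, Fintype.card_fin, smul_smul, mul_comm]
      rw [h1, h2, Finset.sum_congr rfl (fun i _ => h3 i), h4]
  · rintro z ⟨n, hn, hzn⟩ C ⟨hxC, hconv⟩
    apply hconv n hn
    show n • z ∈ foldSum n C
    refine ⟨fun _ => x, fun _ => hxC rfl, ?_⟩
    rw [hzn, Finset.sum_const, Finset.card_univ, Fintype.card_fin]

theorem stmt14 {S : Type*} [AddCommMonoid S] (F : Set ℕ) (hF : F.Nonempty)
    (hpos : ∀ n ∈ F, 0 < n) (hmul : ∀ m ∈ F, ∀ n ∈ F, m * n ∈ F) (x y : S) :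
    Disjoint (convHullF F {x}) (convHullF F {y}) ∨
      convHullF F {x} = convHullF F {y} := by
  rw [hull_singleton F hF hpos hmul x, hull_singleton F hF hpos hmul y]
  by_cases h : ∃ z : S, (∃ n ∈ F, n • z = n • x) ∧ (∃ n ∈ F, n • z = n • y)
  · right
    obtain ⟨z, ⟨m, hm, hmz⟩, ⟨n, hn, hnz⟩⟩ := h
    have hxy : (m * n) • x = (m * n) • y := by
      have h1 : (m * n) • z = (m * n) • x := smul_eq_of_dvd hmz ⟨n, rfl⟩
      have h2 : (m * n) • z = (m * n) • y := smul_eq_of_dvd hnz ⟨m, mul_comm m n⟩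
      rw [← h1, h2]
    ext w
    constructor
    · rintro ⟨k, hk, hkw⟩
      refine ⟨k * (m * n), hmul k hk (m * n) (hmul m hm n hn), ?_⟩
      have := smul_eq_of_dvd hkw ⟨m * n, rfl⟩
      rw [this]
      exact smul_eq_of_dvd hxy ⟨k, mul_comm k (m * n)⟩
    · rintro ⟨k, hk, hkw⟩
      refine ⟨k * (m * n), hmul k hk (m * n) (hmul m hm n hn), ?_⟩
      have := smul_eq_of_dvd hkw ⟨m * n, rfl⟩
      rw [this]
      exact (smul_eq_of_dvd hxy ⟨k, mul_comm k (m * n)⟩).symm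
  · left
    rw [Set.disjoint_left]
    intro z hz1 hz2
    exact h ⟨z, hz1, hz2⟩
end
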